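/- arXiv:math/0210280 — 2 statements merged into one kernel-verified Lean document; each statement's English description precedes it below -/
import Mathlib

section
/- Define the sequence C : ℕ → ℝ by C(2) = 1 and C(N) = (N/2)·(2·C(N−1)+1) for N ≥ 3. Let N ≥ 3 and let Σ = (σ₁,…,σₙ) be a symbolic collision sequence on the vertex set V = {1,…,N} which is C(N)-rich on V. Then there exist a vertex v ∈ V and indices 1 ≤ p < q ≤ n such that: (i) v ∈ σ_p and v ∈ σ_q; (ii) v ∉ σ_j for every j with p < j < q; (iii) if σ_p = σ_q then there exists j with p < j < q and σ_p ∩ σ_j ≠ ∅; and (iv) the subsequence Σ′ of Σ consisting of those terms σ_j with v ∉ σ_j is (2·C(N−1)+1)-rich on the vertex set V∖{v}. -/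
/-- The graph on `V` whose edges are the collision pairs `σ j` for indices
`a < j ≤ b` of the symbolic collision sequence `σ`. -/
def segGraph {V : Type*} [DecidableEq V] (σ : ℕ → Finset V) (a b : ℕ) : SimpleGraph V :=
  SimpleGraph.fromRel (fun u w => ∃ j, a < j ∧ j ≤ b ∧ σ j = {u, w})

/-- `Rich G n C` : there are `m ≥ C` indices
`0 ≤ a₁ < b₁ ≤ a₂ < b₂ ≤ … ≤ a_m < b_m ≤ n` such that each of the segment graphs
`G (a l) (b l)` is connected. -/
def Rich {V : Type*} (G : ℕ → ℕ → SimpleGraph V) (n : ℕ) (C : ℝ) : Prop :=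
  ∃ m : ℕ, C ≤ (m : ℝ) ∧ ∃ a b : ℕ → ℕ,
    (∀ l, 1 ≤ l → l ≤ m → a l < b l) ∧
    (∀ l, 1 ≤ l → l + 1 ≤ m → b l ≤ a (l + 1)) ∧
    (∀ l, 1 ≤ l → l ≤ m → b l ≤ n) ∧
    (∀ l, 1 ≤ l → l ≤ m → (G (a l) (b l)).Connected)

/-!
Every connected graph on at least two vertices has two vertices whose removal leaves it connected
(two leaves of a spanning tree). Double counting over the `m ≥ C(N)` connected windows of `Σ`
gives a vertex `v` that is such a vertex in at least `2m/N ≥ 2C(N-1)+1` of them, and these windows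
witness the richness of `Σ'`. If no pair `p < q` had properties (i)–(iii), then, chaining over
consecutive collisions of `v`, every edge between a collision of `v` in the first window and one in
the third would be either the edge `σ_p = {v, u}` or disjoint from it; the second window could then
not connect `{v, u}` to a third vertex.
-/

open Finset SimpleGraph

namespace SimpleGraph

variable {V : Type*} {G : SimpleGraph V}

theorem Connected.exists_ne_connected_induce_compl_singleton [Finite V] [Nontrivial V]
    (hconn : G.Connected) :
    ∃ u v, u ≠ v ∧ (G.induce {u}ᶜ).Connected ∧ (G.induce {v}ᶜ).Connected := by
  obtain ⟨T, hTG, hT⟩ := hconn.exists_isTree_le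
  have := Fintype.ofFinite V
  classical
  obtain ⟨u, v, huv, hu, hv⟩ := hT.exists_ne_and_degree_eq_one
  exact ⟨u, v, huv, (hT.connected.induce_compl_singleton_of_degree_eq_one hu).mono (by tauto),
    (hT.connected.induce_compl_singleton_of_degree_eq_one hv).mono (by tauto)⟩

end SimpleGraph

section SegmentGraph

variable {V : Type*} [DecidableEq V] {σ : ℕ → Finset V} {a b : ℕ}

theorem segGraph_adj {x y : V} :
    (segGraph σ a b).Adj x y ↔ x ≠ y ∧ ∃ j, a < j ∧ j ≤ b ∧ σ j = {x, y} := by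
  simp [segGraph, Finset.pair_comm y x]

theorem exists_crossing_of_segGraph_connected (h : (segGraph σ a b).Connected) {S : Finset V}
    {x y : V} (hx : x ∈ S) (hy : y ∉ S) :
    ∃ j c d, a < j ∧ j ≤ b ∧ c ∈ S ∧ d ∉ S ∧ σ j = {c, d} := by
  obtain ⟨p⟩ := h.preconnected x y
  obtain ⟨d, -, hc, hd⟩ := p.exists_boundary_dart S hx hy
  obtain ⟨-, j, hj, hjb, hσj⟩ := segGraph_adj.1 d.adj
  exact ⟨j, _, _, hj, hjb, hc, hd, hσj⟩

theorem connected_fromRel_subtype_ne_iff (σ : ℕ → Finset V) (v : V) (a b : ℕ) :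
    (fromRel fun (u w : {x : V // x ≠ v}) => ∃ j, a < j ∧ j ≤ b ∧ σ j = {u.1, w.1}).Connected ↔
      ((segGraph σ a b).induce {v}ᶜ).Connected :=
  Iso.connected_iff
    { toEquiv := Equiv.subtypeEquivRight fun _ => Set.mem_compl_singleton_iff.symm
      map_rel_iff' := by simp [segGraph, Subtype.ext_iff] }

end SegmentGraph

theorem Finset.exists_mul_le_card_bipartiteBelow {α β : Type*} {r : α → β → Prop}
    [∀ a b, Decidable (r a b)] {s : Finset α} {t : Finset β} {k : ℕ} (ht : t.Nonempty)
    (hk : ∀ a ∈ s, k ≤ #(t.bipartiteAbove r a)) :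
    ∃ b ∈ t, #s * k ≤ #t * #(s.bipartiteBelow r b) := by
  refine exists_le_of_sum_le ht ?_
  calc ∑ _ ∈ t, #s * k = #t * (#s * k) := by rw [sum_const, smul_eq_mul]
    _ = #t * ∑ _ ∈ s, k := by rw [sum_const, smul_eq_mul]
    _ ≤ #t * ∑ a ∈ s, #(t.bipartiteAbove r a) := Nat.mul_le_mul_left _ (sum_le_sum hk)
    _ = ∑ b ∈ t, #t * #(s.bipartiteBelow r b) := by
      rw [sum_card_bipartiteAbove_eq_sum_card_bipartiteBelow, mul_sum]

section Windows

variable {m n : ℕ} {a b : ℕ → ℕ}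

theorem end_le_start_of_lt (hab : ∀ l, 1 ≤ l → l ≤ m → a l < b l)
    (hba : ∀ l, 1 ≤ l → l + 1 ≤ m → b l ≤ a (l + 1)) {l l' : ℕ} (hl : 1 ≤ l) (hll' : l < l')
    (hl' : l' ≤ m) : b l ≤ a l' := by
  induction l', hll' using Nat.le_induction with
  | base => exact hba l hl hl'
  | succ k hk ih =>
    calc b l ≤ a k := ih (by omega)
      _ ≤ b k := (hab k (by omega) (by omega)).le
      _ ≤ a (k + 1) := hba k (by omega) hl'

theorem rich_of_subset {W : Type*} {H : ℕ → ℕ → SimpleGraph W} {C : ℝ}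
    (hab : ∀ l, 1 ≤ l → l ≤ m → a l < b l) (hba : ∀ l, 1 ≤ l → l + 1 ≤ m → b l ≤ a (l + 1))
    (hbn : ∀ l, 1 ≤ l → l ≤ m → b l ≤ n) {L : Finset ℕ} (hL : L ⊆ Icc 1 m)
    (hconn : ∀ l ∈ L, (H (a l) (b l)).Connected) (hC : C ≤ #L) : Rich H n C := by
  have hfin : (Set.ofPred (· ∈ L)).Finite := L.finite_toSet
  have hcard : #hfin.toFinset = #L := by simp
  -- `Nat.nth` counts from `0`, the windows from `1`
  set f : ℕ → ℕ := fun l => Nat.nth (· ∈ L) (l - 1)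
  have hfL : ∀ l, 1 ≤ l → l ≤ #L → f l ∈ L := fun l hl hlL =>
    Nat.nth_mem_of_lt_card hfin (by omega)
  have hfm : ∀ l, 1 ≤ l → l ≤ #L → 1 ≤ f l ∧ f l ≤ m := fun l hl hlL =>
    mem_Icc.1 (hL (hfL l hl hlL))
  refine ⟨#L, hC, a ∘ f, b ∘ f, fun l hl hlL => ?_, fun l hl hlL => ?_,
    fun l hl hlL => hbn _ (hfm l hl hlL).1 (hfm l hl hlL).2,
    fun l hl hlL => hconn _ (hfL l hl hlL)⟩
  · exact hab _ (hfm l hl hlL).1 (hfm l hl hlL).2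
  · have hlt : f l < f (l + 1) := Nat.nth_lt_nth_of_lt_card hfin (by omega) (by omega)
    exact end_le_start_of_lt hab hba (hfm l hl (by omega)).1 hlt (hfm (l + 1) (by omega) hlL).2

end Windows

theorem eq_or_disjoint_of_forall_return {V : Type*} {σ : ℕ → Finset V} {v : V} {n : ℕ}
    (hret : ∀ p q, 1 ≤ p → p < q → q ≤ n → v ∈ σ p → v ∈ σ q →
      (∀ j, p < j → j < q → v ∉ σ j) → σ p = σ q ∧ ∀ j, p < j → j < q → Disjoint (σ p) (σ j))
    {s t : ℕ} (hs : 1 ≤ s) (hst : s < t) (ht : t ≤ n) (hvs : v ∈ σ s) (hvt : v ∈ σ t) :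
    σ s = σ t ∧ ∀ j, s < j → j < t → σ j = σ s ∨ Disjoint (σ s) (σ j) := by
  induction hd : t - s using Nat.strong_induction_on generalizing s t with
  | _ d ih =>
    by_cases hr : ∃ r, s < r ∧ r < t ∧ v ∈ σ r
    · obtain ⟨r, hsr, hrt, hvr⟩ := hr
      obtain ⟨hsr_eq, hsr_mid⟩ := ih (r - s) (by omega) hs hsr (by omega) hvs hvr rfl
      obtain ⟨hrt_eq, hrt_mid⟩ := ih (t - r) (by omega) (by omega) hrt ht hvr hvt rfl
      refine ⟨hsr_eq.trans hrt_eq, fun j hsj hjt => ?_⟩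
      rcases lt_trichotomy j r with hjr | rfl | hrj
      · exact hsr_mid j hsj hjr
      · exact Or.inl hsr_eq.symm
      · rw [hsr_eq]; exact hrt_mid j hrj hjt
    · push Not at hr
      obtain ⟨hst_eq, hst_mid⟩ := hret s t hs hst ht hvs hvt hr
      exact ⟨hst_eq, fun j hsj hjt => Or.inr (hst_mid j hsj hjt)⟩

theorem exists_return_of_connected_windows {V : Type*} [DecidableEq V] [Fintype V]
    (hV : 2 < Fintype.card V) {σ : ℕ → Finset V} {n a₁ b₁ a₂ b₂ a₃ b₃ : ℕ} (h₁₂ : b₁ ≤ a₂)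
    (h₂₃ : b₂ ≤ a₃) (h₃ : b₃ ≤ n) (hG₁ : (segGraph σ a₁ b₁).Connected)
    (hG₂ : (segGraph σ a₂ b₂).Connected) (hG₃ : (segGraph σ a₃ b₃).Connected) (v : V) :
    ∃ p q, 1 ≤ p ∧ p < q ∧ q ≤ n ∧ v ∈ σ p ∧ v ∈ σ q ∧ (∀ j, p < j → j < q → v ∉ σ j) ∧
      (σ p = σ q → ∃ j, p < j ∧ j < q ∧ (σ p ∩ σ j).Nonempty) := by
  have : Nontrivial V := Fintype.one_lt_card_iff_nontrivial.1 (by omega)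
  obtain ⟨y, hy⟩ := exists_ne v
  have hvy : y ∉ ({v} : Finset V) := by simpa using hy
  obtain ⟨s, c, u, hs₁, hs₂, hc, -, hσs⟩ :=
    exists_crossing_of_segGraph_connected hG₁ (mem_singleton_self v) hvy
  obtain ⟨t, c', w, ht₃, ht₃', hc', -, hσt⟩ :=
    exists_crossing_of_segGraph_connected hG₃ (mem_singleton_self v) hvy
  rw [mem_singleton] at hc hc'
  subst c c'
  by_contra hno
  push Not at hno
  have hret : ∀ p q, 1 ≤ p → p < q → q ≤ n → v ∈ σ p → v ∈ σ q →
      (∀ j, p < j → j < q → v ∉ σ j) → σ p = σ q ∧ ∀ j, p < j → j < q → Disjoint (σ p) (σ j) :=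
    fun p q hp hpq hq hvp hvq hgap =>
      have ⟨hpq_eq, hpq_mid⟩ := hno p q hp hpq hq hvp hvq hgap
      ⟨hpq_eq, fun j hpj hjq => disjoint_iff_inter_eq_empty.2 (hpq_mid j hpj hjq)⟩
  obtain ⟨z, -, hz⟩ := exists_mem_notMem_of_card_lt_card (s := σ s) (t := univ)
    (by rw [card_univ, hσs]; exact card_le_two.trans_lt hV)
  obtain ⟨j, x, x', hj₁, hj₂, hx, hx', hσj⟩ :=
    exists_crossing_of_segGraph_connected hG₂ (x := v) (by simp [hσs]) hz
  -- between `s` and `t` every edge equals `σ s` or misses it, which `σ j` does not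
  have hmid := (eq_or_disjoint_of_forall_return hret (by omega) (by omega : s < t) (by omega)
    (by simp [hσs]) (by simp [hσt])).2
  rcases hmid j (by omega) (by omega) with heq | hdisj
  · exact hx' (heq ▸ hσj ▸ by simp)
  · exact disjoint_left.1 hdisj hx (by simp [hσj])

theorem one_le_of_rec {C : ℕ → ℝ} (hC2 : C 2 = 1)
    (hCrec : ∀ N : ℕ, 3 ≤ N → C N = ((N : ℝ) / 2) * (2 * C (N - 1) + 1)) {M : ℕ} (hM : 2 ≤ M) :
    1 ≤ C M := by
  induction M, hM using Nat.le_induction with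
  | base => rw [hC2]
  | succ M hM ih =>
    have hM' : (2 : ℝ) ≤ M := by exact_mod_cast hM
    rw [hCrec (M + 1) (by omega), Nat.add_sub_cancel]
    push_cast
    nlinarith

theorem lemma_3_1_general
    (C : ℕ → ℝ) (hC2 : C 2 = 1)
    (hCrec : ∀ N : ℕ, 3 ≤ N → C N = ((N : ℝ) / 2) * (2 * C (N - 1) + 1))
    (N : ℕ) (hN : 3 ≤ N) (n : ℕ) (σ : ℕ → Finset (Fin N))
    (hrich : Rich (segGraph σ) n (C N)) :
    ∃ v : Fin N, ∃ p q : ℕ, 1 ≤ p ∧ p < q ∧ q ≤ n ∧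
      v ∈ σ p ∧ v ∈ σ q ∧
      (∀ j, p < j → j < q → v ∉ σ j) ∧
      (σ p = σ q → ∃ j, p < j ∧ j < q ∧ (σ p ∩ σ j).Nonempty) ∧
      Rich (fun a b => SimpleGraph.fromRel
          (fun (u w : {x : Fin N // x ≠ v}) => ∃ j, a < j ∧ j ≤ b ∧ σ j = {u.1, w.1}))
        n (2 * C (N - 1) + 1) := by
  classical
  obtain ⟨m, hm, a, b, hab, hba, hbn, hconn⟩ := hrich
  have : Nontrivial (Fin N) := Fin.nontrivial_iff_two_le.2 (by omega)
  have hCN : C N = N / 2 * (2 * C (N - 1) + 1) := hCrec N hN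
  have hC : 1 ≤ C (N - 1) := one_le_of_rec hC2 hCrec (by omega)
  have hN' : (3 : ℝ) ≤ N := by exact_mod_cast hN
  have hm : 3 ≤ m := by exact_mod_cast (show (3 : ℝ) ≤ m by nlinarith)
  obtain ⟨v, -, hv⟩ := exists_mul_le_card_bipartiteBelow (s := Icc 1 m) univ_nonempty
    (r := fun l v => ((segGraph σ (a l) (b l)).induce {v}ᶜ).Connected) (k := 2) fun l hl => by
      obtain ⟨u, w, huw, hu, hw⟩ :=
        (hconn l (mem_Icc.1 hl).1 (mem_Icc.1 hl).2).exists_ne_connected_induce_compl_singleton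
      exact one_lt_card.2 ⟨u, by simpa using hu, w, by simpa using hw, huw⟩
  obtain ⟨p, q, hp, hpq, hqn, hvp, hvq, hgap, hsame⟩ :=
    exists_return_of_connected_windows (by rw [Fintype.card_fin]; omega)
      (hba 1 le_rfl (by omega)) (hba 2 (by omega) (by omega)) (hbn 3 (by omega) hm)
      (hconn 1 le_rfl (by omega)) (hconn 2 (by omega) (by omega)) (hconn 3 (by omega) hm) v
  refine ⟨v, p, q, hp, hpq, hqn, hvp, hvq, hgap, hsame,
    rich_of_subset hab hba hbn (filter_subset _ _)
      (fun l hl => (connected_fromRel_subtype_ne_iff σ v _ _).2 (mem_filter.1 hl).2) ?_⟩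
  rw [Nat.card_Icc, add_tsub_cancel_right, card_univ, Fintype.card_fin] at hv
  refine le_of_mul_le_mul_left ?_ (by positivity : (0 : ℝ) < N)
  calc (N : ℝ) * (2 * C (N - 1) + 1) = 2 * C N := by rw [hCN]; ring
    _ ≤ m * 2 := by linarith
    _ ≤ _ := by exact_mod_cast hv

/-- Lemma 3.1: if `Σ` is `C(N)`-rich on `{1,…,N}`, then some vertex `v` and indices
`p < q` satisfy (i)–(iii), and the subsequence obtained by discarding all edges
containing `v` is `(2·C(N−1)+1)`-rich on the remaining vertices. -/
theorem lemma_3_1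
    (C : ℕ → ℝ) (hC2 : C 2 = 1)
    (hCrec : ∀ N : ℕ, 3 ≤ N → C N = ((N : ℝ) / 2) * (2 * C (N - 1) + 1))
    (N : ℕ) (hN : 3 ≤ N) (n : ℕ) (σ : ℕ → Finset (Fin N))
    (hσ : ∀ j ∈ Finset.Icc 1 n, (σ j).card = 2)
    (hrich : Rich (segGraph σ) n (C N)) :
    ∃ v : Fin N, ∃ p q : ℕ, 1 ≤ p ∧ p < q ∧ q ≤ n ∧
      v ∈ σ p ∧ v ∈ σ q ∧
      (∀ j, p < j → j < q → v ∉ σ j) ∧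
      (σ p = σ q → ∃ j, p < j ∧ j < q ∧ (σ p ∩ σ j).Nonempty) ∧
      Rich (fun a b => SimpleGraph.fromRel
          (fun (u w : {x : Fin N // x ≠ v}) => ∃ j, a < j ∧ j ≤ b ∧ σ j = {u.1, w.1}))
        n (2 * C (N - 1) + 1) :=
  lemma_3_1_general C hC2 hCrec N hN n σ hrich
end

section
/- Let p, q ≥ 1 be integers and let A ⊆ ℝ^p × ℝ^q be a set whose (p+q−1)-dimensional Hausdorff measure (with respect to the Euclidean metric on ℝ^{p+q}) is zero. Then for Lebesgue-almost every y ∈ ℝ^p, the slice A_y = {z ∈ ℝ^q : (y,z) ∈ A} has zero (q−1)-dimensional Hausdorff measure in ℝ^q. -/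
/-!
Let `π : X → Y` be 1-Lipschitz and `μ (closedEBall y r) ≤ C * r ^ d`. Cover `A` by sets `t n`
of small diameter with `∑ diam (t n) ^ (s + d)` small. The pieces meeting the fiber `π⁻¹ {y}`
cover `A ∩ π⁻¹ {y}`, and each of them has `y` in the closure of its projection, a set of
`μ`-measure at most `C * diam (t n) ^ d`. Hence `y ↦ ∑ diam (t n) ^ s * 1[y ∈ closure (π '' t n)]`
dominates the `s`-dimensional cover sum of the fiber over `y`, while its integral is at most
`C * ∑ diam (t n) ^ (s + d)`. Fatou's lemma along covers whose mesh and sum tend to zero gives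
`μH[s] (A ∩ π⁻¹ {y}) = 0` for `μ`-a.e. `y`. The slices of `ℝ^p × ℝ^q` are the fibers of the first
projection, with `μ` Lebesgue measure, `d = p` and `s = q - 1`.
-/

open MeasureTheory Measure Metric Set Filter Topology
open scoped ENNReal NNReal

section Slicing

variable {X Y : Type*} [EMetricSpace X] [PseudoEMetricSpace Y]

theorem exists_cover_tsum_lt_of_hausdorffMeasure_eq_zero [MeasurableSpace X] [BorelSpace X]
    {d : ℝ} {A : Set X} (hA : μH[d] A = 0) {r ε : ℝ≥0∞} (hr : 0 < r) (hε : 0 < ε) :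
    ∃ t : ℕ → Set X, A ⊆ ⋃ n, t n ∧ (∀ n, ediam (t n) ≤ r) ∧
      ∑' n, ⨆ _ : (t n).Nonempty, ediam (t n) ^ d < ε := by
  simp only [hausdorffMeasure_apply, ENNReal.iSup_eq_zero] at hA
  simpa only [iInf_lt_iff, exists_prop] using (hA r hr).trans_lt hε

theorem measure_le_mul_ediam_rpow [MeasurableSpace Y] {μ : Measure Y} {C : ℝ≥0∞} {d : ℝ}
    (hμ : ∀ y r, r ≠ ∞ → μ (closedEBall y r) ≤ C * r ^ d) {S : Set Y} (hS : ediam S ≠ ∞) :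
    μ S ≤ C * ediam S ^ d := by
  rcases S.eq_empty_or_nonempty with rfl | ⟨x, hx⟩
  · simp
  · exact (measure_mono fun y hy => edist_le_ediam_of_mem hy hx).trans (hμ x _ hS)

noncomputable def fiberWeight (π : X → Y) (s : ℝ) (t : ℕ → Set X) (y : Y) : ℝ≥0∞ :=
  ∑' n, (closure (π '' t n)).indicator (fun _ => ediam (t n) ^ s) y

theorem measurable_fiberWeight [MeasurableSpace Y] [OpensMeasurableSpace Y] (π : X → Y) (s : ℝ)
    (t : ℕ → Set X) :
    Measurable (fiberWeight π s t) :=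
  Measurable.tsum fun _ => measurable_const.indicator isClosed_closure.measurableSet

theorem lintegral_fiberWeight_le [MeasurableSpace Y] [OpensMeasurableSpace Y] {π : X → Y}
    (hπ : LipschitzWith 1 π) {μ : Measure Y} {C : ℝ≥0∞} {d s : ℝ}
    (hμ : ∀ y r, r ≠ ∞ → μ (closedEBall y r) ≤ C * r ^ d)
    (hd : 0 ≤ d) (hs : 0 ≤ s) {t : ℕ → Set X} (ht : ∀ n, ediam (t n) ≠ ∞) :
    ∫⁻ y, fiberWeight π s t y ∂μ ≤ C * ∑' n, ⨆ _ : (t n).Nonempty, ediam (t n) ^ (s + d) := by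
  have hterm : ∀ n, ∫⁻ y, (closure (π '' t n)).indicator (fun _ => ediam (t n) ^ s) y ∂μ ≤
      C * ⨆ _ : (t n).Nonempty, ediam (t n) ^ (s + d) := by
    intro n
    rw [lintegral_indicator_const isClosed_closure.measurableSet]
    rcases (t n).eq_empty_or_nonempty with hempty | hne
    · simp [hempty]
    have hdiam : ediam (closure (π '' t n)) ≤ ediam (t n) := by
      simpa [ediam_closure] using hπ.ediam_image_le (t n)
    calc ediam (t n) ^ s * μ (closure (π '' t n))
        ≤ ediam (t n) ^ s * (C * ediam (t n) ^ d) := by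
          gcongr
          exact (measure_le_mul_ediam_rpow hμ (ne_top_of_le_ne_top (ht n) hdiam)).trans
            (by gcongr)
      _ = C * ⨆ _ : (t n).Nonempty, ediam (t n) ^ (s + d) := by
          rw [iSup_pos hne, ENNReal.rpow_add_of_nonneg _ _ hs hd]
          ring
  calc ∫⁻ y, fiberWeight π s t y ∂μ
      = ∑' n, ∫⁻ y, (closure (π '' t n)).indicator (fun _ => ediam (t n) ^ s) y ∂μ :=
        lintegral_tsum fun _ =>
          (measurable_const.indicator isClosed_closure.measurableSet).aemeasurable
    _ ≤ ∑' n, C * ⨆ _ : (t n).Nonempty, ediam (t n) ^ (s + d) := ENNReal.tsum_le_tsum hterm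
    _ = C * ∑' n, ⨆ _ : (t n).Nonempty, ediam (t n) ^ (s + d) := ENNReal.tsum_mul_left

theorem hausdorffMeasure_inter_fiber_le_liminf_fiberWeight [MeasurableSpace X] [BorelSpace X]
    {π : X → Y} (s : ℝ) {A : Set X} {t : ℕ → ℕ → Set X} {r : ℕ → ℝ≥0∞} (hr : Tendsto r atTop (𝓝 0))
    (hdiam : ∀ k n, ediam (t k n) ≤ r k) (hcov : ∀ k, A ⊆ ⋃ n, t k n) (y : Y) :
    μH[s] (A ∩ π ⁻¹' {y}) ≤ liminf (fun k => fiberWeight π s (t k) y) atTop := by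
  refine (hausdorffMeasure_le_liminf_tsum s _ r hr
    (fun k (i : {n | y ∈ π '' t k n}) => t k i) (.of_forall fun k i => hdiam k i)
    (.of_forall fun k x hx => ?_)).trans (liminf_le_liminf (.of_forall fun k => ?_))
  · obtain ⟨n, hn⟩ := mem_iUnion.mp (hcov k hx.1)
    exact mem_iUnion.mpr ⟨⟨n, x, hn, hx.2⟩, hn⟩
  · rw [tsum_subtype {n | y ∈ π '' t k n} fun n => ediam (t k n) ^ s]
    exact ENNReal.tsum_le_tsum <| indicator_le fun n hn =>
      (indicator_of_mem (subset_closure (s := π '' t k n) hn) fun _ => ediam (t k n) ^ s).ge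

theorem ae_hausdorffMeasure_inter_fiber_eq_zero [MeasurableSpace X] [BorelSpace X]
    [MeasurableSpace Y] [OpensMeasurableSpace Y] {π : X → Y}
    (hπ : LipschitzWith 1 π) {μ : Measure Y} {C : ℝ≥0∞} {d s : ℝ}
    (hμ : ∀ y r, r ≠ ∞ → μ (closedEBall y r) ≤ C * r ^ d) (hC : C ≠ ∞) (hd : 0 ≤ d) (hs : 0 ≤ s)
    {A : Set X} (hA : μH[s + d] A = 0) :
    ∀ᵐ y ∂μ, μH[s] (A ∩ π ⁻¹' {y}) = 0 := by
  set ε : ℕ → ℝ≥0∞ := fun k => ((k + 1 : ℕ) : ℝ≥0∞)⁻¹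
  have hε_pos : ∀ k, 0 < ε k := fun k => ENNReal.inv_pos.mpr (ENNReal.natCast_ne_top _)
  have hε_ne_top : ∀ k, ε k ≠ ∞ := fun k => ENNReal.inv_ne_top.mpr (by positivity)
  have hε : Tendsto ε atTop (𝓝 0) :=
    ENNReal.tendsto_inv_nat_nhds_zero.comp (tendsto_add_atTop_nat 1)
  choose t hcov hdiam hsum using fun k =>
    exists_cover_tsum_lt_of_hausdorffMeasure_eq_zero hA (hε_pos k) (hε_pos k)
  have hfatou : ∫⁻ y, liminf (fun k => fiberWeight π s (t k) y) atTop ∂μ = 0 := by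
    refine le_antisymm ?_ zero_le
    calc ∫⁻ y, liminf (fun k => fiberWeight π s (t k) y) atTop ∂μ
        ≤ liminf (fun k => ∫⁻ y, fiberWeight π s (t k) y ∂μ) atTop :=
          lintegral_liminf_le fun k => measurable_fiberWeight π s (t k)
      _ ≤ liminf (fun k => C * ε k) atTop := liminf_le_liminf <| .of_forall fun k =>
          (lintegral_fiberWeight_le hπ hμ hd hs fun n =>
            ne_top_of_le_ne_top (hε_ne_top k) (hdiam k n)).trans (by gcongr; exact (hsum k).le)
      _ = 0 := by
          simpa using (ENNReal.Tendsto.const_mul hε (Or.inr hC)).liminf_eq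
  filter_upwards [(lintegral_eq_zero_iff (.liminf fun k => measurable_fiberWeight π s (t k))).mp
    hfatou] with y hy
  exact le_antisymm ((hausdorffMeasure_inter_fiber_le_liminf_fiberWeight s hε hdiam hcov y).trans
    hy.le) zero_le

end Slicing

theorem MeasureTheory.Measure.addHaar_closedEBall {E : Type*} [NormedAddCommGroup E]
    [NormedSpace ℝ E] [MeasurableSpace E] [BorelSpace E] [FiniteDimensional ℝ E]
    (μ : Measure E) [μ.IsAddHaarMeasure] (x : E) {r : ℝ≥0∞} (hr : r ≠ ∞) :
    μ (closedEBall x r) = μ (ball 0 1) * r ^ (Module.finrank ℝ E : ℝ) := by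
  rw [← ENNReal.ofReal_toReal hr, closedEBall_ofReal ENNReal.toReal_nonneg,
    addHaar_closedBall μ x ENNReal.toReal_nonneg, ENNReal.ofReal_pow ENNReal.toReal_nonneg,
    ENNReal.rpow_natCast, mul_comm]

namespace EuclideanSpace

variable {𝕜 ι κ : Type*}

theorem image_toLp_sumElim (y : EuclideanSpace 𝕜 ι) (A : Set (EuclideanSpace 𝕜 (ι ⊕ κ))) :
    (fun z : EuclideanSpace 𝕜 κ => (WithLp.toLp 2 (Sum.elim y z) : EuclideanSpace 𝕜 (ι ⊕ κ))) ''
        {z | WithLp.toLp 2 (Sum.elim y z) ∈ A} =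
      A ∩ (fun x : EuclideanSpace 𝕜 (ι ⊕ κ) => (WithLp.toLp 2 fun i => x (.inl i) :
        EuclideanSpace 𝕜 ι)) ⁻¹' {y} := by
  ext x
  constructor
  · rintro ⟨z, hz, rfl⟩
    exact ⟨hz, rfl⟩
  · rintro ⟨hx, rfl⟩
    have hsplit : (WithLp.toLp 2 (Sum.elim (fun i => x (.inl i)) fun j => x (.inr j)) :
        EuclideanSpace 𝕜 (ι ⊕ κ)) = x := by
      ext (i | j) <;> rfl
    exact ⟨WithLp.toLp 2 fun j => x (.inr j), show _ ∈ A from hsplit.symm ▸ hx, hsplit⟩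

variable [RCLike 𝕜] [Fintype ι] [Fintype κ]

theorem isometry_toLp_sumElim (y : EuclideanSpace 𝕜 ι) :
    Isometry fun z : EuclideanSpace 𝕜 κ =>
      (WithLp.toLp 2 (Sum.elim y z) : EuclideanSpace 𝕜 (ι ⊕ κ)) := by
  refine Isometry.of_dist_eq fun z z' => ?_
  simp [EuclideanSpace.dist_eq, Fintype.sum_sum_type]

theorem lipschitzWith_one_toLp_comp_inl :
    LipschitzWith 1 fun x : EuclideanSpace 𝕜 (ι ⊕ κ) =>
      (WithLp.toLp 2 fun i => x (.inl i) : EuclideanSpace 𝕜 ι) := by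
  refine LipschitzWith.of_dist_le_mul fun x x' => ?_
  simp only [EuclideanSpace.dist_eq, Fintype.sum_sum_type, NNReal.coe_one, one_mul]
  exact Real.sqrt_le_sqrt (le_add_of_nonneg_right (by positivity))

end EuclideanSpace

theorem hausdorff_slicing_general
    (p q : ℕ) (hq : 1 ≤ q)
    (A : Set (EuclideanSpace ℝ (Fin p ⊕ Fin q)))
    (hA : μH[(p : ℝ) + (q : ℝ) - 1] A = 0) :
    ∀ᵐ y : EuclideanSpace ℝ (Fin p),
      μH[(q : ℝ) - 1]
        {z : EuclideanSpace ℝ (Fin q) |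
          (WithLp.toLp 2 (Sum.elim y z) : EuclideanSpace ℝ (Fin p ⊕ Fin q)) ∈ A} = 0 := by
  have hs : (0 : ℝ) ≤ q - 1 := sub_nonneg.mpr (by exact_mod_cast hq)
  have hvolume : ∀ (y : EuclideanSpace ℝ (Fin p)) r, r ≠ ∞ →
      volume (closedEBall y r) ≤ volume (ball (0 : EuclideanSpace ℝ (Fin p)) 1) * r ^ (p : ℝ) :=
    fun y r hr => by rw [addHaar_closedEBall volume y hr, finrank_euclideanSpace_fin]
  have hA' : μH[((q : ℝ) - 1) + p] A = 0 := by rwa [sub_add_eq_add_sub, add_comm (q : ℝ)]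
  filter_upwards [ae_hausdorffMeasure_inter_fiber_eq_zero
    EuclideanSpace.lipschitzWith_one_toLp_comp_inl hvolume measure_ball_lt_top.ne
    p.cast_nonneg hs hA'] with y hy
  rwa [← (EuclideanSpace.isometry_toLp_sumElim y).hausdorffMeasure_image (.inl hs),
    EuclideanSpace.image_toLp_sumElim]

/-- The 'Fubini-type' slicing argument of Proposition 4.2: if
`A ⊆ ℝ^p × ℝ^q = ℝ^{p+q}` has zero `(p+q−1)`-dimensional Hausdorff measure, then
for Lebesgue-almost every `y ∈ ℝ^p` the slice `A_y` has zero `(q−1)`-dimensional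
Hausdorff measure in `ℝ^q`.  Here `ℝ^{p+q}` is the Euclidean space indexed by
`Fin p ⊕ Fin q` and the point of the product corresponding to `(y, z)` is
`Sum.elim y z`. -/
theorem hausdorff_slicing
    (p q : ℕ) (hp : 1 ≤ p) (hq : 1 ≤ q)
    (A : Set (EuclideanSpace ℝ (Fin p ⊕ Fin q)))
    (hA : μH[(p : ℝ) + (q : ℝ) - 1] A = 0) :
    ∀ᵐ y : EuclideanSpace ℝ (Fin p),
      μH[(q : ℝ) - 1]
        {z : EuclideanSpace ℝ (Fin q) |
          (WithLp.toLp 2 (Sum.elim y z) : EuclideanSpace ℝ (Fin p ⊕ Fin q)) ∈ A} = 0 :=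
  hausdorff_slicing_general p q hq A hA
end
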